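/- Existence of small covers for sparse perturbations: Let x, y ∈ [0,1]^n be such that the vector y - x is k-sparse. Then there exists a partition {I_1,...,I_m} of [n] that is a cover of (x,y) with m ≤ 3k + 1. -/

import Mathlib

/-!
Let `S` be the set of coordinates where `x` and `y` differ. Off `S` the two consistent orders
agree, since both are the lexicographic order by (decreasing value, increasing index). The
elements of `S` cut this common order into runs, at most `|S| + 1` in the `P`-order and at most
`|S| + 1` in the `Q`-order; the common refinement of the two run decompositions has at most
`2|S| + 1` blocks, each consecutive in both orders. A coordinate outside `S` is labelled by its
block through the number of elements of `S` preceding it in `P` plus the number preceding it in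
`Q`. With the singletons of `S` this gives `3|S| + 1 ≤ 3k + 1` blocks.
-/

open Finset

/-- A set function on subsets of `Fin n` is submodular (diminishing returns). -/
def Submodular {n : ℕ} (F : Finset (Fin n) → ℝ) : Prop :=
  ∀ ⦃A B : Finset (Fin n)⦄, A ⊆ B → ∀ i ∉ B,
    F (insert i A) - F A ≥ F (insert i B) - F B

/-- `P` is the permutation consistent with `x`: coordinates in nonincreasing order,
ties broken by increasing index. -/
def Consistent {n : ℕ} (x : Fin n → ℝ) (P : Equiv.Perm (Fin n)) : Prop :=
  ∀ i j : Fin n, i ≤ j → x (P i) ≥ x (P j) ∧ (x (P i) = x (P j) → P i ≤ P j)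

/-- `P[k] = {P_1, …, P_k}` (0-indexed: the images of positions `< k`). -/
def prefixSet {n : ℕ} (P : Equiv.Perm (Fin n)) (k : ℕ) : Finset (Fin n) :=
  (Finset.univ.filter (fun i : Fin n => (i : ℕ) < k)).image P

/-- The Lovász extension of `F` at `x`, expressed via the permutation `P` consistent
with `x`. -/
def lovaszExt {n : ℕ} (F : Finset (Fin n) → ℝ) (P : Equiv.Perm (Fin n))
    (x : Fin n → ℝ) : ℝ :=
  ∑ i : Fin n, (F (prefixSet P ((i : ℕ) + 1)) - F (prefixSet P (i : ℕ))) * x (P i)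

/-- The Lovász subgradient at `x`: `g(x)_{P_i} = F(P[i]) - F(P[i-1])`. -/
def lovaszGrad {n : ℕ} (F : Finset (Fin n) → ℝ) (P : Equiv.Perm (Fin n)) :
    Fin n → ℝ :=
  fun j => F (prefixSet P ((P.symm j : ℕ) + 1)) - F (prefixSet P ((P.symm j : ℕ)))

/-- `I` is a cover of `(x, y)` (with `m` blocks): a partition of `[n]` whose blocks
have consecutive preimages under both consistent permutations `P` (for `x`) and `Q`
(for `y`), and on whose non-singleton blocks `x` and `y` agree. -/
def IsCover {n m : ℕ} (x y : Fin n → ℝ) (P Q : Equiv.Perm (Fin n))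
    (I : Fin m → Finset (Fin n)) : Prop :=
  (∀ s t : Fin m, s ≠ t → Disjoint (I s) (I t)) ∧
  (Finset.univ.biUnion I = Finset.univ) ∧
  (∀ s : Fin m, ∃ a b : ℕ, ∀ i : Fin n, P i ∈ I s ↔ a ≤ (i : ℕ) ∧ (i : ℕ) < b) ∧
  (∀ s : Fin m, ∃ a b : ℕ, ∀ i : Fin n, Q i ∈ I s ↔ a ≤ (i : ℕ) ∧ (i : ℕ) < b) ∧
  (∀ s : Fin m, 1 < (I s).card → ∀ i ∈ I s, x i = y i)

variable {n : ℕ}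

lemma Consistent.symm_lt_symm_iff {x : Fin n → ℝ} {P : Equiv.Perm (Fin n)}
    (hP : Consistent x P) {i j : Fin n} :
    P.symm i < P.symm j ↔ x j < x i ∨ x i = x j ∧ i < j := by
  constructor
  · intro h
    obtain ⟨hge, htie⟩ := by simpa using hP _ _ h.le
    rcases hge.lt_or_eq with hlt | heq
    · exact Or.inl hlt
    · exact Or.inr ⟨heq.symm, (htie heq.symm).lt_of_ne fun e => h.ne (by rw [e])⟩
  · intro h
    by_contra! hle
    obtain ⟨hge, htie⟩ := by simpa using hP _ _ hle
    rcases h with hlt | ⟨heq, hlt⟩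
    · linarith
    · exact (htie heq.symm).not_gt hlt

lemma Consistent.symm_lt_symm_iff_of_eq {x y : Fin n → ℝ} {P Q : Equiv.Perm (Fin n)}
    (hP : Consistent x P) (hQ : Consistent y Q) {i j : Fin n}
    (hi : x i = y i) (hj : x j = y j) :
    P.symm i < P.symm j ↔ Q.symm i < Q.symm j := by
  rw [hP.symm_lt_symm_iff, hQ.symm_lt_symm_iff, hi, hj]

lemma Fin.exists_Ico_of_ordConnected {A : Set (Fin n)} (hA : A.OrdConnected) :
    ∃ a b : ℕ, ∀ i : Fin n, i ∈ A ↔ a ≤ i ∧ i < b := by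
  classical
  rcases A.eq_empty_or_nonempty with rfl | hne
  · exact ⟨0, 0, by simp⟩
  have hne' : A.toFinset.Nonempty := Set.toFinset_nonempty.2 hne
  have hlo : A.toFinset.min' hne' ∈ A := Set.mem_toFinset.1 (min'_mem _ _)
  have hhi : A.toFinset.max' hne' ∈ A := Set.mem_toFinset.1 (max'_mem _ _)
  refine ⟨A.toFinset.min' hne', A.toFinset.max' hne' + 1, fun i => ⟨fun hi => ?_, fun h => ?_⟩⟩
  · have h1 := min'_le _ _ (Set.mem_toFinset.2 hi)
    have h2 := le_max' _ _ (Set.mem_toFinset.2 hi)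
    rw [Fin.le_def] at h1 h2
    omega
  · exact hA.out hlo hhi ⟨Fin.le_def.2 h.1, Fin.le_def.2 (by omega)⟩

lemma exists_isCover_of_fibers {ι : Type*} [Fintype ι] {x y : Fin n → ℝ}
    {P Q : Equiv.Perm (Fin n)} (φ : Fin n → ι)
    (hP : ∀ c, (φ ∘ P ⁻¹' {c}).OrdConnected) (hQ : ∀ c, (φ ∘ Q ⁻¹' {c}).OrdConnected)
    (hxy : ∀ i j, i ≠ j → φ i = φ j → x i = y i) :
    ∃ I : Fin (Fintype.card ι) → Finset (Fin n), IsCover x y P Q I := by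
  classical
  let e := Fintype.equivFin ι
  have hinterval : ∀ R : Equiv.Perm (Fin n), (∀ c, (φ ∘ R ⁻¹' {c}).OrdConnected) →
      ∀ s, ∃ a b : ℕ, ∀ i : Fin n, R i ∈ ({j | φ j = e.symm s} : Finset _) ↔ a ≤ i ∧ i < b := by
    intro R hR s
    obtain ⟨a, b, h⟩ := Fin.exists_Ico_of_ordConnected (hR (e.symm s))
    exact ⟨a, b, fun i => by simpa using h i⟩
  refine ⟨fun s => {i | φ i = e.symm s}, fun s t hst => ?_, ?_, hinterval P hP, hinterval Q hQ,
    fun s hcard i hi => ?_⟩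
  · refine disjoint_left.2 fun i hs ht => hst ?_
    simp only [mem_filter, mem_univ, true_and] at hs ht
    exact e.symm.injective (hs.symm.trans ht)
  · ext i
    simpa using ⟨e (φ i), by simp⟩
  · obtain ⟨j, hj, hji⟩ := exists_mem_ne hcard i
    simp only [mem_filter, mem_univ, true_and] at hi hj
    exact hxy i j hji.symm (hi.trans hj.symm)

section RunIndex

variable (S : Finset (Fin n)) (P Q : Equiv.Perm (Fin n))

def countBefore (i : Fin n) : ℕ := #{j ∈ S | P.symm j < P.symm i}

def runIndex (i : Fin n) : ℕ := countBefore S P i + countBefore S Q i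

variable {S P Q}

lemma countBefore_le_card (i : Fin n) : countBefore S P i ≤ #S := card_filter_le _ _

lemma countBefore_mono {i j : Fin n} (h : P.symm i ≤ P.symm j) :
    countBefore S P i ≤ countBefore S P j :=
  card_le_card (monotone_filter_right _ fun _ _ hd => hd.trans_le h)

lemma countBefore_lt_of_mem {d j : Fin n} (hd : d ∈ S) (h : P.symm d < P.symm j) :
    countBefore S P d < countBefore S P j := by
  refine card_lt_card ⟨monotone_filter_right _ fun _ _ ha => ha.trans h, fun hsub => ?_⟩
  simpa using hsub (mem_filter.2 ⟨hd, h⟩)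

lemma runIndex_comm : runIndex S P Q = runIndex S Q P := funext fun _ => add_comm _ _

lemma runIndex_lt (i : Fin n) : runIndex S P Q i < 2 * #S + 1 := by
  have := countBefore_le_card (S := S) (P := P) i
  have := countBefore_le_card (S := S) (P := Q) i
  unfold runIndex
  omega

lemma ordConnected_runIndex_fiber
    (hagree : ∀ i j, i ∉ S → j ∉ S → P.symm i < P.symm j → Q.symm i < Q.symm j) (c : ℕ) :
    {p | P p ∉ S ∧ runIndex S P Q (P p) = c}.OrdConnected := by
  have hmonoP : ∀ {p q : Fin n}, p ≤ q → countBefore S P (P p) ≤ countBefore S P (P q) :=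
    fun hpq => countBefore_mono (by simpa using hpq)
  have hmonoQ : ∀ {p q : Fin n}, P p ∉ S → P q ∉ S → p ≤ q →
      countBefore S Q (P p) ≤ countBefore S Q (P q) := by
    intro p q hp hq hpq
    refine countBefore_mono ?_
    rcases hpq.eq_or_lt with rfl | hlt
    · rfl
    · exact (hagree _ _ hp hq (by simpa using hlt)).le
  refine ⟨fun p ⟨hp, hpc⟩ r ⟨hr, hrc⟩ q ⟨hpq, hqr⟩ => ?_⟩
  unfold runIndex at hpc hrc
  have hq : P q ∉ S := by
    intro hq
    have hqr' : q < r := hqr.lt_of_ne (by rintro rfl; exact hr hq)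
    have := (hmonoP hpq).trans_lt (countBefore_lt_of_mem (j := P r) hq (by simpa using hqr'))
    have := hmonoQ hp hr (hpq.trans hqr)
    omega
  have := hmonoP hpq
  have := hmonoP hqr
  have := hmonoQ hp hq hpq
  have := hmonoQ hq hr hqr
  exact ⟨hq, by unfold runIndex; omega⟩

end RunIndex

section CoverIndex

variable (S : Finset (Fin n)) (P Q : Equiv.Perm (Fin n))

def coverIndex (i : Fin n) : S ⊕ Fin (2 * #S + 1) :=
  if h : i ∈ S then .inl ⟨i, h⟩ else .inr ⟨runIndex S P Q i, runIndex_lt i⟩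

variable {S P Q}

lemma coverIndex_comm : coverIndex S P Q = coverIndex S Q P := by
  funext i
  unfold coverIndex
  split_ifs
  · rfl
  · simp [runIndex_comm (P := P)]

lemma coverIndex_eq_inl {i : Fin n} {d : S} : coverIndex S P Q i = .inl d ↔ i = d := by
  unfold coverIndex
  split_ifs with h
  · simp [Subtype.ext_iff]
  · simpa using fun e : i = d => h (e ▸ d.2)

lemma coverIndex_eq_inr {i : Fin n} {c : Fin (2 * #S + 1)} :
    coverIndex S P Q i = .inr c ↔ i ∉ S ∧ runIndex S P Q i = c := by
  unfold coverIndex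
  split_ifs with h <;> simp [h, Fin.ext_iff]

lemma notMem_of_coverIndex_eq {i j : Fin n} (hij : i ≠ j)
    (h : coverIndex S P Q i = coverIndex S P Q j) : i ∉ S := by
  intro hi
  have : coverIndex S P Q j = .inl ⟨i, hi⟩ := h ▸ coverIndex_eq_inl.2 rfl
  exact hij (coverIndex_eq_inl.1 this).symm

lemma ordConnected_coverIndex_fiber
    (hagree : ∀ i j, i ∉ S → j ∉ S → P.symm i < P.symm j → Q.symm i < Q.symm j)
    (c : S ⊕ Fin (2 * #S + 1)) : (coverIndex S P Q ∘ P ⁻¹' {c}).OrdConnected := by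
  rcases c with d | c
  · convert Set.ordConnected_singleton (a := P.symm d)
    ext p
    simp [coverIndex_eq_inl, ← Equiv.eq_symm_apply]
  · convert ordConnected_runIndex_fiber hagree c using 1
    ext p
    simp [coverIndex_eq_inr]

end CoverIndex

theorem exists_small_cover_general {n k : ℕ} (x y : Fin n → ℝ)
    (hsparse : (Finset.univ.filter (fun i => y i ≠ x i)).card ≤ k)
    (P Q : Equiv.Perm (Fin n)) (hP : Consistent x P) (hQ : Consistent y Q) :
    ∃ (m : ℕ) (I : Fin m → Finset (Fin n)), m ≤ 3 * k + 1 ∧ IsCover x y P Q I := by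
  set S := Finset.univ.filter (fun i => y i ≠ x i)
  have hagree : ∀ i ∉ S, x i = y i := fun i hi => by simpa [S, eq_comm] using hi
  have hPQ : ∀ i j, i ∉ S → j ∉ S → P.symm i < P.symm j → Q.symm i < Q.symm j :=
    fun i j hi hj => (hP.symm_lt_symm_iff_of_eq hQ (hagree i hi) (hagree j hj)).1
  have hQP : ∀ i j, i ∉ S → j ∉ S → Q.symm i < Q.symm j → P.symm i < P.symm j :=
    fun i j hi hj => (hP.symm_lt_symm_iff_of_eq hQ (hagree i hi) (hagree j hj)).2
  obtain ⟨I, hI⟩ := exists_isCover_of_fibers (x := x) (y := y) (coverIndex S P Q)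
    (ordConnected_coverIndex_fiber hPQ)
    (coverIndex_comm (P := P) ▸ ordConnected_coverIndex_fiber hQP)
    (fun i j hij h => hagree i (notMem_of_coverIndex_eq hij h))
  refine ⟨_, I, ?_, hI⟩
  simp only [Fintype.card_sum, Fintype.card_coe, Fintype.card_fin]
  omega

/-- **Existence of small covers for sparse perturbations.** If `y - x` is `k`-sparse
then `(x, y)` admits a cover with at most `3k + 1` blocks. -/
theorem exists_small_cover {n k : ℕ} (x y : Fin n → ℝ)
    (hx : ∀ i, x i ∈ Set.Icc (0 : ℝ) 1) (hy : ∀ i, y i ∈ Set.Icc (0 : ℝ) 1)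
    (hsparse : (Finset.univ.filter (fun i => y i ≠ x i)).card ≤ k)
    (P Q : Equiv.Perm (Fin n)) (hP : Consistent x P) (hQ : Consistent y Q) :
    ∃ (m : ℕ) (I : Fin m → Finset (Fin n)), m ≤ 3 * k + 1 ∧ IsCover x y P Q I :=
  exists_small_cover_general x y hsparse P Q hP hQ
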